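/- arXiv:2408.00990 — 4 statements merged into one kernel-verified Lean document; each statement's English description precedes it below -/
import Mathlib

section
/- Under the hypotheses of Lemma 1 and Lemma 2 of the paper (well-defined forward sweep with a_k e_{k-1} + b_k ≠ 0), the vector U with components u_k = Ω¹_k + Ω²_k·Δζ satisfies the original tridiagonal system: a_k u_{k-1} + b_k u_k + c_k u_{k+1} = d'_k - G·Δζ for all k ∈ {1,...,n} (with the conventions u_0 = u_{n+1} = 0, a_1 = c_n = 0). -/
/-- Correctness of the O(N) coupling algorithm: the vector with components
u_k = Ω¹_k + Ω²_k·Δζ solves the original tridiagonal momentum system. -/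
theorem stmt_4 (n : ℕ) (hn : 1 ≤ n) (a b c d' e ψ1 ψ2 Ω1 Ω2 u : ℕ → ℝ) (G Δζ : ℝ)
    (ha1 : a 1 = 0) (hcn : c n = 0)
    (hden : ∀ k, 1 ≤ k → k ≤ n → a k * e (k - 1) + b k ≠ 0)
    (he0 : e 0 = 0)
    (he : ∀ k, 1 ≤ k → k ≤ n → e k = -c k / (a k * e (k - 1) + b k))
    (hψ10 : ψ1 0 = 0)
    (hψ1 : ∀ k, 1 ≤ k → k ≤ n → ψ1 k = (d' k - a k * ψ1 (k - 1)) / (a k * e (k - 1) + b k))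
    (hψ20 : ψ2 0 = 0)
    (hψ2 : ∀ k, 1 ≤ k → k ≤ n → ψ2 k = (-G - a k * ψ2 (k - 1)) / (a k * e (k - 1) + b k))
    (hΩ1top : Ω1 (n + 1) = 0) (hΩ2top : Ω2 (n + 1) = 0)
    (hΩ1 : ∀ k, 1 ≤ k → k ≤ n → Ω1 k = ψ1 k + e k * Ω1 (k + 1))
    (hΩ2 : ∀ k, 1 ≤ k → k ≤ n → Ω2 k = ψ2 k + e k * Ω2 (k + 1))
    (hu0 : u 0 = 0) (hutop : u (n + 1) = 0)
    (hu : ∀ k, 1 ≤ k → k ≤ n → u k = Ω1 k + Ω2 k * Δζ) :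
    ∀ k, 1 ≤ k → k ≤ n →
      a k * u (k - 1) + b k * u k + c k * u (k + 1) = d' k - G * Δζ := by
  intro k hk1 hkn
  have hukk : u (k + 1) = Ω1 (k + 1) + Ω2 (k + 1) * Δζ := by
    rcases eq_or_lt_of_le hkn with h | h
    · rw [h, hutop, hΩ1top, hΩ2top]; ring
    · exact hu (k + 1) (by omega) (by omega)
  have huk : u k = ψ1 k + ψ2 k * Δζ + e k * u (k + 1) := by
    rw [hu k hk1 hkn, hΩ1 k hk1 hkn, hΩ2 k hk1 hkn, hukk]; ring
  have hprev : u (k - 1) = ψ1 (k - 1) + ψ2 (k - 1) * Δζ + e (k - 1) * u k := by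
    rcases eq_or_lt_of_le hk1 with h | h
    · rw [← h]; simp [hu0, he0, hψ10, hψ20]
    · have h1 : (1:ℕ) ≤ k - 1 := by omega
      have h2 : k - 1 ≤ n := by omega
      have hkk : k - 1 + 1 = k := by omega
      rw [hu (k - 1) h1 h2, hΩ1 (k - 1) h1 h2, hΩ2 (k - 1) h1 h2, hkk,
        hu k hk1 hkn]
      ring
  have hD := hden k hk1 hkn
  have hek : e k * (a k * e (k - 1) + b k) = -c k := by
    rw [he k hk1 hkn]; field_simp
  have hψ1k : ψ1 k * (a k * e (k - 1) + b k) = d' k - a k * ψ1 (k - 1) := by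
    rw [hψ1 k hk1 hkn]; field_simp
  have hψ2k : ψ2 k * (a k * e (k - 1) + b k) = -G - a k * ψ2 (k - 1) := by
    rw [hψ2 k hk1 hkn]; field_simp
  rw [hprev, huk]
  linear_combination hψ1k + Δζ * hψ2k + u (k + 1) * hek
end

section
/- Let a_k ≤ 0, c_k ≤ 0, a_1 = c_n = 0, b_k = 1 - a_k - c_k, G > 0, and define e, ψ² as in the paper: e₀ = 0, e_k = -c_k/(a_k e_{k-1} + b_k), ψ²₀ = 0, ψ²_k = (-G - a_k ψ²_{k-1})/(a_k e_{k-1} + b_k), and Ω²_{n+1} = 0, Ω²_k = ψ²_k + e_k Ω²_{k+1}. Then ψ²_k < 0 for all k ∈ {1,...,n}, and consequently Ω²_k < 0 for all k ∈ {1,...,n}. -/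
/-- Sign of the surface-gradient coefficients: ψ² < 0 and Ω² < 0. -/
theorem stmt_6 (n : ℕ) (hn : 1 ≤ n) (a b c e ψ2 Ω2 : ℕ → ℝ) (G : ℝ) (hG : 0 < G)
    (ha1 : a 1 = 0) (hcn : c n = 0)
    (ha : ∀ k, 1 ≤ k → k ≤ n → a k ≤ 0)
    (hc : ∀ k, 1 ≤ k → k ≤ n → c k ≤ 0)
    (hb : ∀ k, 1 ≤ k → k ≤ n → b k = 1 - a k - c k)
    (he0 : e 0 = 0)
    (he : ∀ k, 1 ≤ k → k ≤ n → e k = -c k / (a k * e (k - 1) + b k))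
    (hψ20 : ψ2 0 = 0)
    (hψ2 : ∀ k, 1 ≤ k → k ≤ n → ψ2 k = (-G - a k * ψ2 (k - 1)) / (a k * e (k - 1) + b k))
    (hΩ2top : Ω2 (n + 1) = 0)
    (hΩ2 : ∀ k, 1 ≤ k → k ≤ n → Ω2 k = ψ2 k + e k * Ω2 (k + 1)) :
    (∀ k, 1 ≤ k → k ≤ n → ψ2 k < 0) ∧ (∀ k, 1 ≤ k → k ≤ n → Ω2 k < 0) := by
  have main : ∀ k, k ≤ n → 0 ≤ e k ∧ e k ≤ 1 ∧ ψ2 k ≤ 0 ∧ (1 ≤ k → ψ2 k < 0) := by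
    intro k
    induction k with
    | zero => intro _; simp [he0, hψ20]
    | succ m ih =>
      intro hkn
      have hmn : m ≤ n := Nat.le_of_succ_le hkn
      obtain ⟨he0m, he1m, hψm, _⟩ := ih hmn
      have h1 : 1 ≤ m + 1 := Nat.le_add_left 1 m
      have haK := ha (m+1) h1 hkn
      have hcK := hc (m+1) h1 hkn
      have hbK := hb (m+1) h1 hkn
      have hden : (1:ℝ) ≤ a (m+1) * e m + b (m+1) := by
        have : a (m+1) * e m + b (m+1) = 1 - c (m+1) + a (m+1) * (e m - 1) := by
          rw [hbK]; ring
        rw [this]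
        nlinarith
      have hdenpos : (0:ℝ) < a (m+1) * e m + b (m+1) := lt_of_lt_of_le one_pos hden
      have heq := he (m+1) h1 hkn
      have hψeq := hψ2 (m+1) h1 hkn
      simp only [Nat.add_sub_cancel] at heq hψeq
      have hnum : -G - a (m+1) * ψ2 m < 0 := by nlinarith
      have hψlt : ψ2 (m+1) < 0 := by
        rw [hψeq]; exact div_neg_of_neg_of_pos hnum hdenpos
      refine ⟨?_, ?_, le_of_lt hψlt, fun _ => hψlt⟩
      · rw [heq]; exact div_nonneg (by linarith) (le_of_lt hdenpos)
      · rw [heq]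
        rw [div_le_one hdenpos]
        rw [hbK]; nlinarith
  have hψneg : ∀ k, 1 ≤ k → k ≤ n → ψ2 k < 0 := fun k h1 h2 => (main k h2).2.2.2 h1
  refine ⟨hψneg, ?_⟩
  have key : ∀ d k, 1 ≤ k → k ≤ n → n - k = d → Ω2 k < 0 := by
    intro d
    induction d with
    | zero =>
      intro k h1 h2 hd
      have hk : k = n := by omega
      subst hk
      rw [hΩ2 k h1 h2, hΩ2top, mul_zero, add_zero]
      exact hψneg k h1 h2
    | succ m ih =>
      intro k h1 h2 hd
      have hksucc : k + 1 ≤ n := by omega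
      have hΩ1 : Ω2 (k+1) < 0 := ih (k+1) (by omega) hksucc (by omega)
      have he0k : 0 ≤ e k := (main k h2).1
      rw [hΩ2 k h1 h2]
      have : e k * Ω2 (k+1) ≤ 0 := mul_nonpos_of_nonneg_of_nonpos he0k (le_of_lt hΩ1)
      have := hψneg k h1 h2
      linarith
  exact fun k h1 h2 => key (n - k) k h1 h2 rfl
end

section
/- With the hypotheses above (a_k ≤ 0, c_k ≤ 0, a_1 = c_n = 0, b_k = 1 - a_k - c_k, G > 0), the coefficients satisfy the bound |ψ²_k| ≤ G·k for all k, and hence |Ω²_k| ≤ G·Σ_{j=k}^{n} j ≤ G·n² for all k ∈ {1,...,n}. -/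
open Finset

/-!
With `b = 1 - a - c` the pivot of the forward sweep is `D_k = a_k e_{k-1} + b_k = 1 - c_k - a_k (1 - e_{k-1})`,
so `D_k ≥ 1` and `(1 - e_k) D_k = 1 - a_k (1 - e_{k-1})`. The sharper bound `|ψ²_k| ≤ G k (1 - e_k)` then
reproduces itself along the sweep, which gives `|ψ²_k| ≤ G k` and `0 ≤ e_k < 1`. Since the back substitution
multiplies by `e_k ∈ [0, 1)`, the bounds on `ψ²` simply add up to a bound on `Ω²`.
-/

section SweepStep

variable {a b c e : ℝ}

lemma one_le_sweep_pivot (ha : a ≤ 0) (hc : c ≤ 0) (hb : b = 1 - a - c) (he : e ≤ 1) :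
    1 ≤ a * e + b := by
  subst hb
  nlinarith

lemma sweep_ratio_mem_Ico (ha : a ≤ 0) (hc : c ≤ 0) (hb : b = 1 - a - c) (he : e ≤ 1) :
    0 ≤ -c / (a * e + b) ∧ -c / (a * e + b) < 1 := by
  have hD := one_le_sweep_pivot ha hc hb he
  refine ⟨div_nonneg (neg_nonneg.mpr hc) (by linarith), ?_⟩
  rw [div_lt_one (by linarith)]
  subst hb
  nlinarith

lemma abs_sweep_rhs_le {G x ψ : ℝ} (hG : 0 ≤ G) (hx : 0 ≤ x) (ha : a ≤ 0) (hc : c ≤ 0)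
    (hb : b = 1 - a - c) (he : e ≤ 1) (hψ : |ψ| ≤ G * x * (1 - e)) :
    |(-G - a * ψ) / (a * e + b)| ≤ G * (x + 1) * (1 - -c / (a * e + b)) := by
  have hD := one_le_sweep_pivot ha hc hb he
  have hnum : |-G - a * ψ| ≤ G + -a * (G * x * (1 - e)) := calc
    |-G - a * ψ| ≤ |-G| + |a * ψ| := abs_sub _ _
    _ = G + -a * |ψ| := by rw [abs_neg, abs_of_nonneg hG, abs_mul, abs_of_nonpos ha]
    _ ≤ G + -a * (G * x * (1 - e)) := by gcongr; linarith
  rw [abs_div, abs_of_pos (a := a * e + b) (by linarith), div_le_iff₀ (by linarith), mul_assoc,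
    sub_mul, div_mul_cancel₀ _ (by linarith), one_mul]
  refine hnum.trans ?_
  subst hb
  nlinarith [mul_nonneg (mul_nonneg hG hx) (mul_nonneg (neg_nonneg.mpr ha) (sub_nonneg.mpr he)),
    mul_nonneg hG (mul_nonneg (neg_nonneg.mpr ha) (sub_nonneg.mpr he))]

end SweepStep

theorem sweep_invariant {n : ℕ} {a b c e ψ : ℕ → ℝ} {G : ℝ} (hG : 0 ≤ G)
    (ha : ∀ k, 1 ≤ k → k ≤ n → a k ≤ 0)
    (hc : ∀ k, 1 ≤ k → k ≤ n → c k ≤ 0)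
    (hb : ∀ k, 1 ≤ k → k ≤ n → b k = 1 - a k - c k)
    (he0 : e 0 = 0)
    (he : ∀ k, 1 ≤ k → k ≤ n → e k = -c k / (a k * e (k - 1) + b k))
    (hψ0 : ψ 0 = 0)
    (hψ : ∀ k, 1 ≤ k → k ≤ n → ψ k = (-G - a k * ψ (k - 1)) / (a k * e (k - 1) + b k)) :
    ∀ k ≤ n, 0 ≤ e k ∧ e k < 1 ∧ |ψ k| ≤ G * k * (1 - e k) := by
  intro k
  induction k with
  | zero => simp [he0, hψ0]
  | succ k ih =>
    intro hk
    obtain ⟨-, he₁, hψk⟩ := ih (by omega)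
    have h1 : 1 ≤ k + 1 := by omega
    have hek := he (k + 1) h1 hk
    have hψk1 := hψ (k + 1) h1 hk
    rw [Nat.add_sub_cancel] at hek hψk1
    obtain ⟨hr₀, hr₁⟩ := sweep_ratio_mem_Ico (ha _ h1 hk) (hc _ h1 hk) (hb _ h1 hk) he₁.le
    refine ⟨hek ▸ hr₀, hek ▸ hr₁, ?_⟩
    rw [hek, hψk1, Nat.cast_succ]
    exact abs_sweep_rhs_le hG k.cast_nonneg (ha _ h1 hk) (hc _ h1 hk) (hb _ h1 hk) he₁.le hψk

theorem abs_le_sum_Icc_of_back_substitution {n : ℕ} {e ψ Ω β : ℕ → ℝ}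
    (he : ∀ k, 1 ≤ k → k ≤ n → |e k| ≤ 1)
    (hψ : ∀ k, 1 ≤ k → k ≤ n → |ψ k| ≤ β k)
    (htop : Ω (n + 1) = 0)
    (hΩ : ∀ k, 1 ≤ k → k ≤ n → Ω k = ψ k + e k * Ω (k + 1)) :
    ∀ k, 1 ≤ k → k ≤ n + 1 → |Ω k| ≤ ∑ j ∈ Icc k n, β j := by
  intro k hk1 hk
  induction hk using Nat.decreasingInduction with
  | self => simp [htop]
  | of_succ k hkn ih =>
    replace hkn : k ≤ n := by omega
    rw [hΩ k hk1 hkn, ← add_sum_Ioc_eq_sum_Icc hkn, ← Icc_add_one_left_eq_Ioc]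
    calc |ψ k + e k * Ω (k + 1)| ≤ |ψ k| + |e k| * |Ω (k + 1)| := by
          rw [← abs_mul]; exact abs_add_le _ _
      _ ≤ β k + 1 * ∑ j ∈ Icc (k + 1) n, β j := by
          gcongr
          · exact hψ k hk1 hkn
          · exact he k hk1 hkn
          · exact ih (by omega)
      _ = β k + ∑ j ∈ Icc (k + 1) n, β j := by rw [one_mul]

lemma sum_Icc_cast_le_sq {k n : ℕ} (hk : 1 ≤ k) : ∑ j ∈ Icc k n, (j : ℝ) ≤ (n : ℝ) ^ 2 := by
  calc ∑ j ∈ Icc k n, (j : ℝ) ≤ #(Icc k n) • (n : ℝ) :=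
        sum_le_card_nsmul _ _ _ fun j hj => by exact_mod_cast (mem_Icc.mp hj).2
    _ ≤ n • (n : ℝ) := by
        gcongr
        rw [Nat.card_Icc]
        omega
    _ = (n : ℝ) ^ 2 := by rw [nsmul_eq_mul, sq]

theorem stmt_7_general (n : ℕ) (a b c e ψ2 Ω2 : ℕ → ℝ) (G : ℝ) (hG : 0 < G)
    (ha : ∀ k, 1 ≤ k → k ≤ n → a k ≤ 0)
    (hc : ∀ k, 1 ≤ k → k ≤ n → c k ≤ 0)
    (hb : ∀ k, 1 ≤ k → k ≤ n → b k = 1 - a k - c k)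
    (he0 : e 0 = 0)
    (he : ∀ k, 1 ≤ k → k ≤ n → e k = -c k / (a k * e (k - 1) + b k))
    (hψ20 : ψ2 0 = 0)
    (hψ2 : ∀ k, 1 ≤ k → k ≤ n → ψ2 k = (-G - a k * ψ2 (k - 1)) / (a k * e (k - 1) + b k))
    (hΩ2top : Ω2 (n + 1) = 0)
    (hΩ2 : ∀ k, 1 ≤ k → k ≤ n → Ω2 k = ψ2 k + e k * Ω2 (k + 1)) :
    (∀ k, 1 ≤ k → k ≤ n → |ψ2 k| ≤ G * k) ∧
    (∀ k, 1 ≤ k → k ≤ n →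
      |Ω2 k| ≤ G * ∑ j ∈ Icc k n, (j : ℝ) ∧
      G * ∑ j ∈ Icc k n, (j : ℝ) ≤ G * (n : ℝ) ^ 2) := by
  have hinv := sweep_invariant hG.le ha hc hb he0 he hψ20 hψ2
  have hψ : ∀ k, 1 ≤ k → k ≤ n → |ψ2 k| ≤ G * k := fun k _ hk => by
    obtain ⟨he₀, -, hψk⟩ := hinv k hk
    exact hψk.trans (mul_le_of_le_one_right (by positivity) (by linarith))
  have he1 : ∀ k, 1 ≤ k → k ≤ n → |e k| ≤ 1 := fun k _ hk => by
    obtain ⟨he₀, he₁, -⟩ := hinv k hk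
    exact abs_le.mpr ⟨by linarith, he₁.le⟩
  refine ⟨hψ, fun k hk1 hkn => ⟨?_, ?_⟩⟩
  · rw [mul_sum]
    exact abs_le_sum_Icc_of_back_substitution he1 hψ hΩ2top hΩ2 k hk1 (by omega)
  · exact mul_le_mul_of_nonneg_left (sum_Icc_cast_le_sq hk1) hG.le

/-- Bounds on the surface-gradient coefficients: |ψ²_k| ≤ G·k and
|Ω²_k| ≤ G·Σ_{j=k}^n j ≤ G·n². -/
theorem stmt_7 (n : ℕ) (hn : 1 ≤ n) (a b c e ψ2 Ω2 : ℕ → ℝ) (G : ℝ) (hG : 0 < G)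
    (ha1 : a 1 = 0) (hcn : c n = 0)
    (ha : ∀ k, 1 ≤ k → k ≤ n → a k ≤ 0)
    (hc : ∀ k, 1 ≤ k → k ≤ n → c k ≤ 0)
    (hb : ∀ k, 1 ≤ k → k ≤ n → b k = 1 - a k - c k)
    (he0 : e 0 = 0)
    (he : ∀ k, 1 ≤ k → k ≤ n → e k = -c k / (a k * e (k - 1) + b k))
    (hψ20 : ψ2 0 = 0)
    (hψ2 : ∀ k, 1 ≤ k → k ≤ n → ψ2 k = (-G - a k * ψ2 (k - 1)) / (a k * e (k - 1) + b k))
    (hΩ2top : Ω2 (n + 1) = 0)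
    (hΩ2 : ∀ k, 1 ≤ k → k ≤ n → Ω2 k = ψ2 k + e k * Ω2 (k + 1)) :
    (∀ k, 1 ≤ k → k ≤ n → |ψ2 k| ≤ G * k) ∧
    (∀ k, 1 ≤ k → k ≤ n →
      |Ω2 k| ≤ G * ∑ j ∈ Icc k n, (j : ℝ) ∧
      G * ∑ j ∈ Icc k n, (j : ℝ) ≤ G * (n : ℝ) ^ 2) :=
  stmt_7_general n a b c e ψ2 Ω2 G hG ha hc hb he0 he hψ20 hψ2 hΩ2top hΩ2
end

section
/- Let A be an n×n real tridiagonal matrix with b_k = 1 − a_k − c_k on the diagonal, a_k ≤ 0 on the subdiagonal, c_k ≤ 0 on the superdiagonal, a_1 = c_n = 0. Then for any right-hand side vector D, the solution U of AU = D produced by the forward sweep e_k = −c_k/(a_k e_{k−1} + b_k), f_k = (D_k − a_k f_{k−1})/(a_k e_{k−1} + b_k) (with e₀ = f₀ = 0) followed by back-substitution u_n = f_n, u_k = f_k + e_k u_{k+1}, satisfies the max-norm bound ‖U‖_∞ ≤ Σ_{k=1}^n |D_k|. -/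
open Finset

/-- Unconditional stability of the implicit vertical diffusion solve: the
Thomas-algorithm solution satisfies ‖U‖_∞ ≤ Σ|D_k|. -/
theorem stmt_17 (n : ℕ) (hn : 1 ≤ n) (a b c e f u D : ℕ → ℝ)
    (ha1 : a 1 = 0) (hcn : c n = 0)
    (ha : ∀ k, 1 ≤ k → k ≤ n → a k ≤ 0)
    (hc : ∀ k, 1 ≤ k → k ≤ n → c k ≤ 0)
    (hb : ∀ k, 1 ≤ k → k ≤ n → b k = 1 - a k - c k)
    (he0 : e 0 = 0) (hf0 : f 0 = 0)
    (he : ∀ k, 1 ≤ k → k ≤ n → e k = -c k / (a k * e (k - 1) + b k))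
    (hf : ∀ k, 1 ≤ k → k ≤ n → f k = (D k - a k * f (k - 1)) / (a k * e (k - 1) + b k))
    (hun : u n = f n)
    (hu : ∀ k, 1 ≤ k → k < n → u k = f k + e k * u (k + 1)) :
    ∀ k, 1 ≤ k → k ≤ n → |u k| ≤ ∑ j ∈ Icc 1 n, |D j| := by
  set S : ℕ → ℝ := fun k => ∑ j ∈ Icc 1 k, |D j| with hS
  have hSnonneg : ∀ k, 0 ≤ S k := fun k => Finset.sum_nonneg fun j _ => abs_nonneg _
  have hSmono : ∀ {j k : ℕ}, j ≤ k → S j ≤ S k := by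
    intro j k hjk
    exact Finset.sum_le_sum_of_subset_of_nonneg
      (Finset.Icc_subset_Icc_right hjk) (fun i _ _ => abs_nonneg _)
  have hSsucc : ∀ k, S (k + 1) = S k + |D (k + 1)| := by
    intro k
    rw [hS]
    simp [Finset.sum_Icc_succ_top (Nat.le_add_left 1 k)]
  -- forward sweep invariant
  have fwd : ∀ k, k ≤ n → 0 ≤ e k ∧ e k ≤ 1 ∧ |f k| ≤ (1 - e k) * S k := by
    intro k
    induction k with
    | zero =>
      intro _
      refine ⟨by rw [he0], by rw [he0]; norm_num, ?_⟩
      rw [he0, hf0, hS]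
      simp
    | succ k ih =>
      intro hkn
      have hk1 : 1 ≤ k + 1 := Nat.le_add_left 1 k
      obtain ⟨he1, he2, hf1⟩ := ih (le_trans (Nat.le_succ k) hkn)
      have ha' := ha (k + 1) hk1 hkn
      have hc' := hc (k + 1) hk1 hkn
      have hb' := hb (k + 1) hk1 hkn
      set d := a (k + 1) * e k + b (k + 1) with hd
      have hd1 : 1 ≤ d := by
        rw [hd, hb']
        nlinarith
      have hd0 : 0 < d := lt_of_lt_of_le one_pos hd1
      have hek1 : e (k + 1) = -c (k + 1) / d := by
        have := he (k + 1) hk1 hkn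
        simpa using this
      have hfk1 : f (k + 1) = (D (k + 1) - a (k + 1) * f k) / d := by
        have := hf (k + 1) hk1 hkn
        simpa using this
      have hE0 : 0 ≤ e (k + 1) := by
        rw [hek1]
        exact div_nonneg (by linarith) (le_of_lt hd0)
      have hE1 : e (k + 1) ≤ 1 := by
        rw [hek1, div_le_one hd0, hd, hb']
        nlinarith
      refine ⟨hE0, hE1, ?_⟩
      rw [hfk1, hek1, abs_div, abs_of_pos hd0, div_le_iff₀ hd0]
      have key : (1 - -c (k + 1) / d) * S (k + 1) * d = (d + c (k + 1)) * S (k + 1) := by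
        field_simp
        ring
      rw [key]
      have habs : |D (k + 1) - a (k + 1) * f k| ≤ |D (k + 1)| + (-a (k + 1)) * |f k| := by
        calc |D (k + 1) - a (k + 1) * f k| ≤ |D (k + 1)| + |a (k + 1) * f k| :=
          abs_sub (D (k + 1)) (a (k + 1) * f k)
        _ = |D (k + 1)| + (-a (k + 1)) * |f k| := by
          rw [abs_mul, abs_of_nonpos ha']
      have hdc : d + c (k + 1) = 1 + (-a (k + 1)) * (1 - e k) := by
        rw [hd, hb']; ring
      have h1 : (-a (k + 1)) * |f k| ≤ (-a (k + 1)) * ((1 - e k) * S k) := by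
        apply mul_le_mul_of_nonneg_left hf1 (by linarith)
      have h2 : S k ≤ S (k + 1) := hSmono (Nat.le_succ k)
      have h3 : |D (k + 1)| ≤ S (k + 1) := by
        rw [hSsucc k]
        linarith [hSnonneg k]
      rw [hdc]
      nlinarith [hSnonneg (k + 1), mul_nonneg (neg_nonneg.mpr ha') (sub_nonneg.mpr he2)]
  -- backward substitution
  have bwd : ∀ j k, 1 ≤ k → k ≤ n → n - k ≤ j → |u k| ≤ S n := by
    intro j
    induction j with
    | zero =>
      intro k hk1 hkn hj
      have hkn' : k = n := le_antisymm hkn (by omega)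
      subst hkn'
      obtain ⟨hE0, _, hF⟩ := fwd k le_rfl
      rw [hun]
      calc |f k| ≤ (1 - e k) * S k := hF
      _ ≤ S k := by nlinarith [hSnonneg k]
    | succ j ih =>
      intro k hk1 hkn hj
      rcases eq_or_lt_of_le hkn with hkn' | hlt
      · subst hkn'
        obtain ⟨hE0, _, hF⟩ := fwd k le_rfl
        rw [hun]
        calc |f k| ≤ (1 - e k) * S k := hF
        _ ≤ S k := by nlinarith [hSnonneg k]
      · have hIH : |u (k + 1)| ≤ S n := ih (k + 1) (by omega) hlt (by omega)
        obtain ⟨hE0, hE1, hF⟩ := fwd k (le_of_lt hlt)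
        rw [hu k hk1 hlt]
        calc |f k + e k * u (k + 1)| ≤ |f k| + |e k * u (k + 1)| := abs_add_le _ _
        _ = |f k| + e k * |u (k + 1)| := by rw [abs_mul, abs_of_nonneg hE0]
        _ ≤ (1 - e k) * S k + e k * S n :=
          add_le_add hF (mul_le_mul_of_nonneg_left hIH hE0)
        _ ≤ S n := by nlinarith [hSmono (le_of_lt hlt)]
  intro k hk1 hkn
  exact bwd (n - k) k hk1 hkn le_rfl
end
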